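/- arXiv:2312.09094 — 2 statements merged into one kernel-verified Lean document; each statement's English description precedes it below -/
import Mathlib

section
/- Let ≼ be a well-quasi-order on a set X of objects, and suppose the relation x ≼ y is decidable, membership in X is decidable, and P ⊆ X is downward closed for ≼. Then P is a decidable subset of X, i.e., there exists an algorithm deciding membership in P. -/
/-!
The complement `X \ P` is upward closed, and in a well-quasi-order every subset is dominated by
a finite subset of itself (a bad sequence would otherwise be built greedily). So there are finitely
many forbidden elements `b₁, …, bₖ ∉ P` with `x ∈ P ↔ x ∈ X ∧ ¬ bᵢ ≼ x` for all `i`, and the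
right-hand side is decidable. The algorithm exists but is not produced: the `bᵢ` are not computed.
-/

namespace ComputablePred

variable {α β : Type*} [Primcodable α] [Primcodable β]

theorem and {p q : α → Prop} (hp : ComputablePred p) (hq : ComputablePred q) :
    ComputablePred fun a => p a ∧ q a := by
  obtain ⟨f, hf, rfl⟩ := computable_iff.1 hp
  obtain ⟨g, hg, rfl⟩ := computable_iff.1 hq
  exact computable_iff.2 ⟨fun a => f a && g a, Primrec.and.to_comp.comp hf hg, by simp⟩

theorem comp {p : β → Prop} (hp : ComputablePred p) {f : α → β} (hf : Computable f) :
    ComputablePred fun a => p (f a) := by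
  obtain ⟨g, hg, rfl⟩ := computable_iff.1 hp
  exact computable_iff.2 ⟨fun a => g (f a), hg.comp hf, rfl⟩

theorem forall_mem_finset {p : β → α → Prop} (hp : ComputablePred fun q : β × α => p q.1 q.2)
    (s : Finset β) : ComputablePred fun a => ∀ b ∈ s, p b a := by
  classical
  induction s using Finset.induction with
  | empty => exact (Computable.computablePred (p := fun _ => True) (Computable.const true)).of_eq (by simp)
  | insert b s _ ih =>
    exact ((hp.comp ((Computable.const b).pair Computable.id)).and ih).of_eq (by simp)

end ComputablePred

theorem Set.PartiallyWellOrderedOn.exists_finset_dominating {α : Type*} {r : α → α → Prop}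
    {s t : Set α} (hs : s.PartiallyWellOrderedOn r) (hts : t ⊆ s) :
    ∃ B : Finset α, ↑B ⊆ t ∧ ∀ x ∈ t, ∃ b ∈ B, r b x := by
  by_contra! hbad
  obtain ⟨f, hft, hf⟩ := exists_seq_of_forall_finset_exists (· ∈ t) (fun a b => ¬ r a b) hbad
  obtain ⟨m, n, hmn, hr⟩ := hs.exists_lt fun n => hts (hft n)
  exact hf m n hmn hr

theorem computablePred_of_downwardClosed_general (X P : Set ℕ) (r : ℕ → ℕ → Prop)
    (hXdec : ComputablePred (· ∈ X))
    (hrdec : ComputablePred fun q : ℕ × ℕ => r q.1 q.2)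
    (hwqo : ∀ f : ℕ → ℕ, (∀ n, f n ∈ X) → ∃ i j : ℕ, i < j ∧ r (f i) (f j))
    (hPX : P ⊆ X)
    (hdc : ∀ x ∈ X, ∀ y ∈ P, r x y → x ∈ P) :
    ComputablePred (· ∈ P) := by
  obtain ⟨B, hBX, hB⟩ := (Set.partiallyWellOrderedOn_iff_exists_lt.2 hwqo).exists_finset_dominating
    (t := X \ P) Set.sdiff_subset
  have hP : ∀ x, x ∈ X ∧ (∀ b ∈ B, ¬ r b x) ↔ x ∈ P := by
    refine fun x => ⟨fun ⟨hx, hxB⟩ => by_contra fun hxP => ?_, fun hxP => ⟨hPX hxP, ?_⟩⟩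
    · obtain ⟨b, hb, hbx⟩ := hB x ⟨hx, hxP⟩
      exact hxB b hb hbx
    · exact fun b hb hbx => (hBX hb).2 (hdc b (hBX hb).1 x hxP hbx)
  exact (hXdec.and (hrdec.not.forall_mem_finset B)).of_eq hP

/-- If `r` is a well-quasi-order on a set `X` (of naturals, encoding arbitrary
effectively-presented objects), the relation `r` and membership in `X` are decidable
(computable), and `P ⊆ X` is downward closed for `r`, then membership in `P` is
decidable by an algorithm. -/
theorem computablePred_of_downwardClosed (X P : Set ℕ) (r : ℕ → ℕ → Prop)
    (hXdec : ComputablePred (· ∈ X))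
    (hrdec : ComputablePred fun q : ℕ × ℕ => r q.1 q.2)
    (hrefl : ∀ x ∈ X, r x x)
    (htrans : ∀ x ∈ X, ∀ y ∈ X, ∀ z ∈ X, r x y → r y z → r x z)
    (hwqo : ∀ f : ℕ → ℕ, (∀ n, f n ∈ X) → ∃ i j : ℕ, i < j ∧ r (f i) (f j))
    (hPX : P ⊆ X)
    (hdc : ∀ x ∈ X, ∀ y ∈ P, r x y → x ∈ P) :
    ComputablePred (· ∈ P) :=
  computablePred_of_downwardClosed_general X P r hXdec hrdec hwqo hPX hdc
end

section
/- If (A, ≼) is a well-quasi-order, then the set of finite sequences over A, ordered by the subsequence embedding order (u ≼* v iff u embeds as a subsequence of v with each entry of u ≼ the corresponding entry of v), is a well-quasi-order. (Higman's lemma, used in Nash-Williams' proof of Kruskal's theorem.) -/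
def IsWQO {X : Type*} (r : X → X → Prop) : Prop :=
  ∀ f : ℕ → X, ∃ i j : ℕ, i < j ∧ r (f i) (f j)

/-!
Nash-Williams' minimal bad sequence argument. If there is a bad sequence of lists, choose one,
`f`, that is lexicographically minimal with respect to length. Every `f n` is non-empty, say
`f n = a n :: t n`. By Ramsey's theorem for pairs, and because `r` is almost full, `a` has a
subsequence `a ∘ g` with `r (a (g m)) (a (g n))` for all `m < n`. The sequence
`f 0, …, f (g 0 - 1), t (g 0), t (g 1), …` is shorter than `f` at position `g 0`, hence good by
minimality; but a good pair in it lifts to a good pair of `f` by putting the heads back.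
-/

open Set

section Ramsey

variable {α : Type*}

theorem Set.Infinite.exists_infinite_subset_forall_iff {S : Set α} (hS : S.Infinite)
    (p : α → Prop) : ∃ T ⊆ S, T.Infinite ∧ ∃ q : Prop, ∀ l ∈ T, (p l ↔ q) := by
  by_cases hp : {l ∈ S | p l}.Infinite
  · exact ⟨_, sep_subset _ _, hp, True, fun l hl => iff_true_intro hl.2⟩
  · exact ⟨S \ {l ∈ S | p l}, sdiff_subset, hS.sdiff (not_infinite.mp hp), False,
      fun l hl => iff_false_intro fun hpl => hl.2 ⟨hl.1, hpl⟩⟩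

theorem exists_homogeneous_subseq (r : α → α → Prop) (f : ℕ → α) :
    ∃ (g : ℕ ↪o ℕ) (p : Prop), ∀ m n, m < n → (r (f (g m)) (f (g n)) ↔ p) := by
  -- Shrink infinite sets `seq k` so that, with `a k` the least element of `seq k`, the truth
  -- of `r (f (a k)) (f l)` is the same `colour` for all `l ∈ seq (k + 1)`; then the colour of a
  -- pair `a i, a j` depends only on `i`, and a pigeonhole on `i` finishes.
  have step (S : {S : Set ℕ // S.Infinite}) : ∃ T : {T : Set ℕ // T.Infinite},
      T.1 ⊆ S.1 \ Iic (sInf S.1) ∧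
        ∃ q : Prop, ∀ l ∈ T.1, (r (f (sInf S.1)) (f l) ↔ q) := by
    obtain ⟨T, hTS, hT, hq⟩ := (S.2.sdiff (finite_Iic (sInf S.1))).exists_infinite_subset_forall_iff
      fun l => r (f (sInf S.1)) (f l)
    exact ⟨⟨T, hT⟩, hTS, hq⟩
  choose next hsub colour hcolour using step
  let seq : ℕ → {S : Set ℕ // S.Infinite} := fun k => next^[k] ⟨univ, infinite_univ⟩
  let a : ℕ → ℕ := fun k => sInf (seq k).1
  have hseq_succ (k : ℕ) : seq (k + 1) = next (seq k) := Function.iterate_succ_apply' next k _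
  have hseq_anti : Antitone fun k => (seq k).1 := antitone_nat_of_succ_le fun k => by
    rw [hseq_succ]
    exact (hsub _).trans sdiff_subset
  have ha_later {i j : ℕ} (hij : i < j) :
      a j ∈ (seq i).1 \ Iic (a i) ∧ (r (f (a i)) (f (a j)) ↔ colour (seq i)) := by
    have h : a j ∈ (next (seq i)).1 :=
      hseq_succ i ▸ hseq_anti hij (Nat.sInf_mem (seq j).2.nonempty)
    exact ⟨hsub _ h, hcolour _ _ h⟩
  have ha_mono : StrictMono a := strictMono_nat_of_lt_succ fun k =>
    not_le.mp (ha_later k.lt_succ_self).1.2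
  obtain ⟨p, hp⟩ := Finite.exists_infinite_fiber fun k => colour (seq k)
  let K := (fun k => colour (seq k)) ⁻¹' {p}
  let e : ℕ ↪o ℕ :=
    (Nat.Subtype.orderIsoOfNat K).toOrderEmbedding.trans (OrderEmbedding.subtype _)
  have he (k : ℕ) : colour (seq (e k)) = p := (Nat.Subtype.orderIsoOfNat K k).2
  refine ⟨e.trans (OrderEmbedding.ofStrictMono a ha_mono), p, fun m n hmn => ?_⟩
  exact he m ▸ (ha_later (e.strictMono hmn)).2

theorem WellQuasiOrdered.exists_increasing_subseq {r : α → α → Prop} (h : WellQuasiOrdered r)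
    (f : ℕ → α) : ∃ g : ℕ ↪o ℕ, ∀ m n, m < n → r (f (g m)) (f (g n)) := by
  obtain ⟨g, p, hg⟩ := exists_homogeneous_subseq r f
  obtain ⟨m, n, hmn, hr⟩ := h (f ∘ g)
  exact ⟨g, fun m' n' hmn' => (hg m' n' hmn').mpr ((hg m n hmn).mp hr)⟩

end Ramsey

namespace List

open Set.PartiallyWellOrderedOn (IsBadSeq)

variable {α : Type*} {r : α → α → Prop}

def spliceTails (f t : ℕ → List α) (g : ℕ ↪o ℕ) (n : ℕ) : List α :=
  if n < g 0 then f n else t (g (n - g 0))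

theorem isBadSeq_spliceTails {f t : ℕ → List α} {a : ℕ → α} {g : ℕ ↪o ℕ}
    (hf : IsBadSeq (SublistForall₂ r) univ f) (hat : ∀ n, f n = a n :: t n)
    (hg : ∀ m n, m < n → r (a (g m)) (a (g n))) :
    IsBadSeq (SublistForall₂ r) univ (spliceTails f t g) := by
  refine ⟨fun _ => mem_univ _, fun m n hmn hr => ?_⟩
  unfold spliceTails at hr
  split_ifs at hr with hm hn hn
  · exact hf.2 m n hmn hr
  · refine hf.2 m (g (n - g 0)) (hm.trans_le (g.monotone (Nat.zero_le _))) ?_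
    rw [hat (g _)]
    exact hr.cons_right
  · omega
  · have hlt : m - g 0 < n - g 0 := by omega
    refine hf.2 _ _ (g.strictMono hlt) ?_
    rw [hat, hat]
    exact hr.cons (hg _ _ hlt)

theorem _root_.WellQuasiOrdered.sublistForall₂ (h : WellQuasiOrdered r) :
    WellQuasiOrdered (SublistForall₂ r) := by
  rw [← Set.partiallyWellOrderedOn_univ_iff,
    Set.PartiallyWellOrderedOn.iff_not_exists_isMinBadSeq length]
  rintro ⟨f, hbad, hmin⟩
  have hne (n : ℕ) : f n ≠ [] := fun hn => hbad.2 n (n + 1) n.lt_succ_self (hn ▸ .nil)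
  choose a t hat using fun n => exists_cons_of_ne_nil (hne n)
  obtain ⟨g, hg⟩ := h.exists_increasing_subseq a
  refine hmin (g 0) (spliceTails f t g) (fun m hm => (if_pos hm).symm) ?_
    (isBadSeq_spliceTails hbad hat hg)
  simp [spliceTails, hat]

end List

/-- Higman's lemma: if `(A, r)` is a well-quasi-order, then finite sequences over `A`
ordered by subsequence embedding (`List.SublistForall₂ r`) form a well-quasi-order. -/
theorem higman {A : Type*} (r : A → A → Prop) (hwqo : IsWQO r) :
    IsWQO (List.SublistForall₂ r) :=
  WellQuasiOrdered.sublistForall₂ hwqo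
end
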